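/- arXiv:math/0410452 — 2 statements merged into one kernel-verified Lean document; each statement's English description precedes it below -/
import Mathlib

section
/- Let D be a bounded open domain in ℝ³ with Lipschitz boundary ∂D, let k > 0 be a constant, let a ≥ 0, and let f : ℝ → ℝ satisfy the sign condition u·f(u) ≥ 0 for all u with |u| ≥ a. Then every classical solution u of the boundary value problem (−Δ + k²)u + f(u) = 0 in D, u = 0 on ∂D, satisfies the pointwise bound |u(x)| ≤ a for all x ∈ D̄. -/
open MeasureTheory

/-- The Laplacian of `u : ℝⁿ → ℝ`: the sum of the pure second partial derivatives. -/
noncomputable def laplacian {n : ℕ} (u : EuclideanSpace ℝ (Fin n) → ℝ)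
    (x : EuclideanSpace ℝ (Fin n)) : ℝ :=
  ∑ i : Fin n,
    fderiv ℝ (fun y => fderiv ℝ u y (EuclideanSpace.single i (1 : ℝ))) x
      (EuclideanSpace.single i (1 : ℝ))

/-- `u` is a classical solution of `(-Δ + k²)u + g(u) = 0` in `D`, `u = 0` on `∂D`. -/
def IsClassicalSolution {n : ℕ} (k : ℝ) (g : ℝ → ℝ)
    (D : Set (EuclideanSpace ℝ (Fin n))) (u : EuclideanSpace ℝ (Fin n) → ℝ) : Prop :=
  ContinuousOn u (closure D) ∧ ContDiffOn ℝ 2 u D ∧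
    (∀ x ∈ D, -laplacian u x + k ^ 2 * u x + g (u x) = 0) ∧
    (∀ x ∈ frontier D, u x = 0)

/-- An open set `D ⊆ ℝ³` has Lipschitz boundary: near each boundary point, after a rigid
rotation, `D` coincides with the region above the graph of a Lipschitz function. -/
def HasLipschitzBoundary (D : Set (EuclideanSpace ℝ (Fin 3))) : Prop :=
  ∀ x ∈ frontier D,
    ∃ (U : Set (EuclideanSpace ℝ (Fin 3)))
      (g : EuclideanSpace ℝ (Fin 3) ≃ₗᵢ[ℝ] EuclideanSpace ℝ (Fin 3))
      (φ : EuclideanSpace ℝ (Fin 2) → ℝ) (L : NNReal),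
      IsOpen U ∧ x ∈ U ∧ LipschitzWith L φ ∧
        D ∩ U = {y ∈ U | φ (WithLp.toLp 2 (fun i : Fin 2 => g y i.castSucc)) < g y 2}

/-!
Weak maximum principle. If `max u` over `D̄` exceeded `a ≥ 0`, it would be attained at an
interior point `x₀`, since `u = 0` on `∂D`. There `Δu(x₀) ≤ 0`, by the one-variable second
derivative test along each coordinate line, whereas the equation gives
`Δu(x₀) = k²u(x₀) + f(u(x₀)) > 0`. The lower bound is the same argument for `-u`, which solves
the problem with nonlinearity `t ↦ -f(-t)`, again nonnegative above `a`.
-/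

open Filter Topology

theorem IsLocalMax.deriv_deriv_nonpos {h : ℝ → ℝ} {x : ℝ} (hmax : IsLocalMax h x)
    (hc : ContinuousAt h x) : deriv (deriv h) x ≤ 0 := by
  by_contra! hpos
  -- the second derivative test would make `x` a local minimum too, so `h` is locally constant
  have hmin : IsLocalMin h x := isLocalMin_of_deriv_deriv_pos hpos hmax.deriv_eq_zero hc
  have hconst : h =ᶠ[𝓝 x] fun _ => h x := by
    filter_upwards [hmin, hmax] with t h₁ h₂ using le_antisymm h₂ h₁
  rw [hconst.deriv.deriv_eq] at hpos
  simp at hpos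

theorem IsLocalMax.fderiv_fderiv_apply_nonpos {E : Type*} [NormedAddCommGroup E]
    [NormedSpace ℝ E] {u : E → ℝ} {x : E} (hmax : IsLocalMax u x) (hu : ContDiffAt ℝ 2 u x)
    (v : E) : fderiv ℝ (fun y => fderiv ℝ u y v) x v ≤ 0 := by
  have hline : ∀ t : ℝ, HasDerivAt (fun t : ℝ => x + t • v) v t := fun t => by
    simpa using ((hasDerivAt_id t).smul_const v).const_add x
  have hcont : Continuous fun t : ℝ => x + t • v := by fun_prop
  have hmax' : IsLocalMax (fun t : ℝ => u (x + t • v)) 0 :=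
    IsLocalMax.comp_continuous (g := fun t : ℝ => x + t • v) (by simpa using hmax)
      hcont.continuousAt
  have hderiv : deriv (fun t : ℝ => u (x + t • v)) =ᶠ[𝓝 0]
      fun t => fderiv ℝ u (x + t • v) v := by
    have hdiff : ∀ᶠ y in 𝓝 x, DifferentiableAt ℝ u y :=
      (hu.eventually (by simp)).mono fun y hy => hy.differentiableAt (by norm_num)
    filter_upwards [(hcont.tendsto 0).eventually (by simpa using hdiff)] with t ht
    exact (ht.hasFDerivAt.comp_hasDerivAt t (hline t)).deriv
  have hsecond : HasDerivAt (fun t : ℝ => fderiv ℝ u (x + t • v) v)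
      (fderiv ℝ (fun y => fderiv ℝ u y v) x v) 0 := by
    have hd : DifferentiableAt ℝ (fun y => fderiv ℝ u y v) x :=
      ((hu.fderiv_right (m := 1) (by norm_num)).differentiableAt (by norm_num)).clm_apply
        (differentiableAt_const v)
    exact hd.hasFDerivAt.comp_hasDerivAt_of_eq 0 (hline 0) (by simp)
  rw [← hsecond.deriv, ← hderiv.deriv_eq]
  exact hmax'.deriv_deriv_nonpos (hu.continuousAt.comp_of_eq hcont.continuousAt (by simp))

theorem laplacian_nonpos_of_isLocalMax {n : ℕ} {u : EuclideanSpace ℝ (Fin n) → ℝ}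
    {x : EuclideanSpace ℝ (Fin n)} (hmax : IsLocalMax u x) (hu : ContDiffAt ℝ 2 u x) :
    laplacian u x ≤ 0 :=
  Finset.sum_nonpos fun _ _ => hmax.fderiv_fderiv_apply_nonpos hu _

theorem laplacian_neg {n : ℕ} (u : EuclideanSpace ℝ (Fin n) → ℝ) (x : EuclideanSpace ℝ (Fin n)) :
    laplacian (fun y => -u y) x = -laplacian u x := by
  simp [laplacian]

namespace IsClassicalSolution

variable {n : ℕ} {k : ℝ} {f : ℝ → ℝ} {D : Set (EuclideanSpace ℝ (Fin n))}
  {u : EuclideanSpace ℝ (Fin n) → ℝ}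

theorem neg (hu : IsClassicalSolution k f D u) :
    IsClassicalSolution k (fun t => -f (-t)) D (fun y => -u y) := by
  obtain ⟨hcont, hsmooth, heq, hbdry⟩ := hu
  refine ⟨hcont.neg, hsmooth.neg, fun x hx => ?_, fun x hx => by simp [hbdry x hx]⟩
  simp only [laplacian_neg, neg_neg]
  linarith [heq x hx]

theorem le_of_nonneg_on_Ioi (hu : IsClassicalSolution k f D u) (hD_open : IsOpen D)
    (hD_bdd : Bornology.IsBounded D) (hk : k ≠ 0) {a : ℝ} (ha : 0 ≤ a)
    (hf : ∀ t > a, 0 ≤ f t) : ∀ x ∈ closure D, u x ≤ a := by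
  obtain ⟨hcont, hsmooth, heq, hbdry⟩ := hu
  intro x hx
  obtain ⟨x₀, hx₀, hmax⟩ := hD_bdd.isCompact_closure.exists_isMaxOn ⟨x, hx⟩ hcont
  refine (hmax hx).trans (not_lt.1 fun hlt => ?_)
  rw [closure_eq_self_union_frontier] at hx₀
  have hx₀D : x₀ ∈ D := hx₀.resolve_right fun hfr => by linarith [hbdry x₀ hfr]
  have hnhds : D ∈ 𝓝 x₀ := hD_open.mem_nhds hx₀D
  have hΔ : laplacian u x₀ ≤ 0 :=
    laplacian_nonpos_of_isLocalMax ((hmax.on_subset subset_closure).isLocalMax hnhds)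
      (hsmooth.contDiffAt hnhds)
  have hku : 0 < k ^ 2 * u x₀ := mul_pos (by positivity) (ha.trans_lt hlt)
  linarith [heq x₀ hx₀D, hf _ hlt]

end IsClassicalSolution

theorem apriori_bound_of_sign_condition_general
    (D : Set (EuclideanSpace ℝ (Fin 3))) (hD_open : IsOpen D)
    (hD_bdd : Bornology.IsBounded D)
    (k : ℝ) (hk : 0 < k) (a : ℝ) (ha : 0 ≤ a) (f : ℝ → ℝ)
    (hf_sign : ∀ u : ℝ, a ≤ |u| → 0 ≤ u * f u)
    (u : EuclideanSpace ℝ (Fin 3) → ℝ) (hu : IsClassicalSolution k f D u) :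
    ∀ x ∈ closure D, |u x| ≤ a := by
  have hf_pos : ∀ t > a, 0 ≤ f t := fun t ht =>
    nonneg_of_mul_nonneg_right (hf_sign t (ht.le.trans (le_abs_self t))) (ha.trans_lt ht)
  have hf_neg : ∀ t > a, 0 ≤ -f (-t) := fun t ht => by
    have := hf_sign (-t) (by rw [abs_neg]; exact ht.le.trans (le_abs_self t))
    exact nonneg_of_mul_nonneg_right (by linarith) (ha.trans_lt ht)
  intro x hx
  have hupper := hu.le_of_nonneg_on_Ioi hD_open hD_bdd hk.ne' ha hf_pos x hx
  have hlower := hu.neg.le_of_nonneg_on_Ioi hD_open hD_bdd hk.ne' ha hf_neg x hx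
  exact abs_le.2 ⟨by linarith, hupper⟩

/-- Under the sign condition `u·f(u) ≥ 0` for `|u| ≥ a`, every classical solution of
`(-Δ + k²)u + f(u) = 0` in `D`, `u = 0` on `∂D`, satisfies `|u(x)| ≤ a` on `D̄`. -/
theorem apriori_bound_of_sign_condition
    (D : Set (EuclideanSpace ℝ (Fin 3))) (hD_open : IsOpen D)
    (hD_bdd : Bornology.IsBounded D) (hD_lip : HasLipschitzBoundary D)
    (k : ℝ) (hk : 0 < k) (a : ℝ) (ha : 0 ≤ a) (f : ℝ → ℝ)
    (hf_sign : ∀ u : ℝ, a ≤ |u| → 0 ≤ u * f u)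
    (u : EuclideanSpace ℝ (Fin 3) → ℝ) (hu : IsClassicalSolution k f D u) :
    ∀ x ∈ closure D, |u x| ≤ a :=
  apriori_bound_of_sign_condition_general D hD_open hD_bdd k hk a ha f hf_sign u hu
end

section
/- Let D ⊆ ℝ³ be a bounded measurable set, let k > 0, let μ > 0, and let G : D × D → ℝ be a measurable kernel satisfying 0 ≤ G(x,y) ≤ e^{−k|x−y|}/(4π|x−y|) for all x, y ∈ D with x ≠ y. Suppose u : D → ℝ is a bounded measurable function and f : ℝ → ℝ satisfies |f(t)| ≤ μ for all t ∈ ℝ, and that u(x) = −∫_D G(x,y) f(u(y)) dy for every x ∈ D. Then sup over x ∈ D of |u(x)| ≤ μ/k². -/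
/-!
The kernel `G(x, ·)` is dominated by the Yukawa potential `e^{-k|x-y|}/(4π|x-y|)`, so
`|u(x)| ≤ μ ∫_{ℝ³} e^{-k|z|}/(4π|z|) dz`. In polar coordinates the factor `r²` of the volume
element cancels the singularity and the integral becomes `∫₀^∞ r e^{-kr} dr = 1/k²`.
-/

open MeasureTheory Set Real

/-- The Green function of `-Δ + k²` on `ℝ³`, as a function of the radius (junk value `0` at
`r = 0`). -/
noncomputable def yukawaPotential (k r : ℝ) : ℝ := exp (-(k * r)) / (4 * π * r)

lemma yukawaPotential_nonneg (k : ℝ) {r : ℝ} (hr : 0 ≤ r) : 0 ≤ yukawaPotential k r := by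
  unfold yukawaPotential; positivity

lemma sq_mul_yukawaPotential (k : ℝ) {r : ℝ} (hr : r ≠ 0) :
    r ^ 2 * yukawaPotential k r = (4 * π)⁻¹ * (r * exp (-(k * r))) := by
  unfold yukawaPotential
  field_simp

lemma integrableOn_Ioi_sq_mul_yukawaPotential {k : ℝ} (hk : 0 < k) :
    IntegrableOn (fun r ↦ r ^ 2 * yukawaPotential k r) (Ioi 0) := by
  have h : IntegrableOn
      (fun r : ℝ ↦ (4 * π)⁻¹ * (r ^ (1 : ℝ) * exp (-k * r ^ (1 : ℝ)))) (Ioi 0) :=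
    (integrableOn_rpow_mul_exp_neg_mul_rpow (by norm_num) one_pos hk).const_mul _
  refine h.congr_fun (fun r hr ↦ ?_) measurableSet_Ioi
  rw [sq_mul_yukawaPotential k (ne_of_gt hr)]
  norm_num

lemma integral_Ioi_sq_mul_yukawaPotential {k : ℝ} (hk : 0 < k) :
    ∫ r in Ioi 0, r ^ 2 * yukawaPotential k r = (4 * π * k ^ 2)⁻¹ := by
  rw [setIntegral_congr_fun measurableSet_Ioi fun r hr ↦ sq_mul_yukawaPotential k (ne_of_gt hr),
    integral_const_mul]
  have hGamma : ∫ r in Ioi 0, r * exp (-(k * r)) = (1 / k) ^ 2 := by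
    simpa [Gamma_two, rpow_two, show (2 : ℝ) - 1 = 1 by norm_num]
      using integral_rpow_mul_exp_neg_mul_Ioi two_pos hk
  rw [hGamma]
  field_simp

lemma integrable_yukawaPotential_norm {k : ℝ} (hk : 0 < k) :
    Integrable fun z : EuclideanSpace ℝ (Fin 3) ↦ yukawaPotential k ‖z‖ := by
  rw [integrable_fun_norm_addHaar, finrank_euclideanSpace_fin]
  exact integrableOn_Ioi_sq_mul_yukawaPotential hk

lemma integral_yukawaPotential_norm {k : ℝ} (hk : 0 < k) :
    ∫ z : EuclideanSpace ℝ (Fin 3), yukawaPotential k ‖z‖ = (k ^ 2)⁻¹ := by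
  rw [integral_fun_norm_addHaar, finrank_euclideanSpace_fin]
  simp only [smul_eq_mul, Nat.add_one_sub_one, measureReal_def,
    EuclideanSpace.volume_ball_fin_three, ENNReal.ofReal_one, one_pow, one_mul,
    integral_Ioi_sq_mul_yukawaPotential hk]
  rw [nsmul_eq_mul, ENNReal.toReal_ofReal (by positivity)]
  field_simp
  norm_num

theorem sup_bound_of_integral_equation_general (D : Set (EuclideanSpace ℝ (Fin 3)))
    (hD_meas : MeasurableSet D)
    (k : ℝ) (hk : 0 < k) (μ : ℝ)
    (G : EuclideanSpace ℝ (Fin 3) → EuclideanSpace ℝ (Fin 3) → ℝ)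
    (hG_nonneg : ∀ x ∈ D, ∀ y ∈ D, x ≠ y → 0 ≤ G x y)
    (hG_le : ∀ x ∈ D, ∀ y ∈ D, x ≠ y →
      G x y ≤ Real.exp (-(k * ‖x - y‖)) / (4 * Real.pi * ‖x - y‖))
    (u : EuclideanSpace ℝ (Fin 3) → ℝ)
    (f : ℝ → ℝ) (hf : ∀ t : ℝ, |f t| ≤ μ)
    (heq : ∀ x ∈ D, u x = -∫ y in D, G x y * f (u y)) :
    ∀ x ∈ D, |u x| ≤ μ / k ^ 2 := by
  intro x hx
  have hμ : 0 ≤ μ := (abs_nonneg _).trans (hf 0)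
  have hint : Integrable fun y ↦ μ * yukawaPotential k ‖x - y‖ :=
    ((integrable_yukawaPotential_norm hk).comp_sub_left x).const_mul μ
  have hbound :
      ∀ᵐ y ∂volume.restrict D, ‖G x y * f (u y)‖ ≤ μ * yukawaPotential k ‖x - y‖ := by
    filter_upwards [ae_restrict_mem hD_meas, ae_restrict_of_ae (Measure.ae_ne volume x)]
      with y hy hyx
    have hG₀ := hG_nonneg x hx y hy hyx.symm
    have hG₁ : G x y ≤ yukawaPotential k ‖x - y‖ := hG_le x hx y hy hyx.symm
    rw [norm_mul, Real.norm_of_nonneg hG₀, mul_comm μ]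
    exact mul_le_mul hG₁ (hf _) (norm_nonneg _) (hG₀.trans hG₁)
  calc |u x| = ‖∫ y in D, G x y * f (u y)‖ := by rw [heq x hx, abs_neg, Real.norm_eq_abs]
    _ ≤ ∫ y in D, μ * yukawaPotential k ‖x - y‖ :=
      norm_integral_le_of_norm_le hint.integrableOn hbound
    _ ≤ ∫ y, μ * yukawaPotential k ‖x - y‖ :=
      setIntegral_le_integral hint <|
        .of_forall fun y ↦ mul_nonneg hμ (yukawaPotential_nonneg k (norm_nonneg _))
    _ = μ / k ^ 2 := by
      rw [integral_const_mul, integral_sub_left_eq_self (fun z ↦ yukawaPotential k ‖z‖),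
        integral_yukawaPotential_norm hk, div_eq_mul_inv]

/-- If `0 ≤ G(x,y) ≤ e^{-k|x-y|}/(4π|x-y|)` on `D × D`, `|f| ≤ μ`, and a bounded
measurable `u` satisfies `u(x) = -∫_D G(x,y) f(u(y)) dy` on `D`, then
`sup_{x ∈ D} |u(x)| ≤ μ/k²`. -/
theorem sup_bound_of_integral_equation (D : Set (EuclideanSpace ℝ (Fin 3)))
    (hD_meas : MeasurableSet D) (hD_bdd : Bornology.IsBounded D)
    (k : ℝ) (hk : 0 < k) (μ : ℝ) (hμ : 0 < μ)
    (G : EuclideanSpace ℝ (Fin 3) → EuclideanSpace ℝ (Fin 3) → ℝ)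
    (hG_meas : Measurable fun p : EuclideanSpace ℝ (Fin 3) × EuclideanSpace ℝ (Fin 3) =>
      G p.1 p.2)
    (hG_nonneg : ∀ x ∈ D, ∀ y ∈ D, x ≠ y → 0 ≤ G x y)
    (hG_le : ∀ x ∈ D, ∀ y ∈ D, x ≠ y →
      G x y ≤ Real.exp (-(k * ‖x - y‖)) / (4 * Real.pi * ‖x - y‖))
    (u : EuclideanSpace ℝ (Fin 3) → ℝ) (hu_meas : Measurable u)
    (hu_bdd : ∃ C : ℝ, ∀ x ∈ D, |u x| ≤ C)
    (f : ℝ → ℝ) (hf : ∀ t : ℝ, |f t| ≤ μ)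
    (heq : ∀ x ∈ D, u x = -∫ y in D, G x y * f (u y)) :
    ∀ x ∈ D, |u x| ≤ μ / k ^ 2 :=
  sup_bound_of_integral_equation_general D hD_meas k hk μ G hG_nonneg hG_le u f hf heq
end
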